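/- Relative to the sorted basis of Grassmann monomials, the matrix of the left multiplication operator L_{Tp_ε(u)} is the transpose of the matrix of L_u: [L_u]^T = [L_{Tp_ε(u)}], for every u ∈ Cl(V,Q). -/

import Mathlib

noncomputable section
open CliffordAlgebra

/-- The quadratic form `Q(x) = ε₁x₁² + ⋯ + εₙxₙ²`. -/
def Qe {n : ℕ} (ε : Fin n → ℝ) : QuadraticForm ℝ (Fin n → ℝ) :=
  QuadraticMap.weightedSumSquares ℝ ε

/-- The orthonormal generators `eᵢ` of `Cl(V,Q)`, with `eᵢ² = εᵢ`. -/
def gen {n : ℕ} (ε : Fin n → ℝ) (i : Fin n) : CliffordAlgebra (Qe ε) :=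
  ι (Qe ε) (Pi.single i 1)

/-- The basis monomial `e_I = e_{i₁}⋯e_{iₛ}`, `i₁ < ⋯ < iₛ` the elements of `I`. -/
def eProd {n : ℕ} (ε : Fin n → ℝ) (I : Finset (Fin n)) : CliffordAlgebra (Qe ε) :=
  ((I.sort (· ≤ ·)).map (gen ε)).prod

/-! The scalar part `τ` (the coefficient of `e_∅`) turns `⟨x, y⟩ = τ(Tp_ε(x) y)` into a symmetric
pairing for which the monomials are orthonormal: `Tp_ε(e_K) e_J` is a multiple of `e_{K ∆ J}`, and
`Tp_ε(e_K) e_K = ∏_{k ∈ K} ε_k² = 1`. Matrix coefficients are then `[L_u]_{JI} = ⟨e_J, u e_I⟩`, and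
since `Tp_ε` reverses products, `[L_{Tp_ε(u)}]_{IJ} = ⟨e_I, Tp_ε(u) e_J⟩ = ⟨u e_I, e_J⟩`. -/

section Generators

variable {n : ℕ} (ε : Fin n → ℝ)

theorem Qe_single (i : Fin n) (c : ℝ) : Qe ε (Pi.single i c) = ε i * c * c := by
  simp only [Qe, QuadraticMap.weightedSumSquares_apply, Pi.single_apply]
  simp [mul_assoc]

theorem gen_mul_self (i : Fin n) : gen ε i * gen ε i = algebraMap ℝ _ (ε i) := by
  rw [gen, ι_sq_scalar, Qe_single, mul_one, mul_one]

theorem Qe_isOrtho_single {i j : Fin n} (h : i ≠ j) :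
    (Qe ε).IsOrtho (Pi.single i 1) (Pi.single j 1) := by
  rw [QuadraticMap.isOrtho_def]
  simp only [Qe, QuadraticMap.weightedSumSquares_apply, ← Finset.sum_add_distrib]
  refine Finset.sum_congr rfl fun k _ => ?_
  by_cases hi : k = i <;> by_cases hj : k = j <;> simp_all

theorem gen_mul_gen_mul_of_ne {i j : Fin n} (h : i ≠ j) (x : CliffordAlgebra (Qe ε)) :
    gen ε i * (gen ε j * x) = -(gen ε j * (gen ε i * x)) :=
  ι_mul_ι_mul_of_isOrtho x (Qe_isOrtho_single ε h)

theorem eProd_empty : eProd ε ∅ = 1 := by simp [eProd]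

theorem eProd_insert_of_lt {a : Fin n} {s : Finset (Fin n)} (h : ∀ x ∈ s, a < x) :
    eProd ε (insert a s) = gen ε a * eProd ε s := by
  rw [eProd, Finset.sort_insert _ (fun x hx => (h x hx).le) (fun ha => (h a ha).false),
    List.map_cons, List.prod_cons, eProd]

theorem exists_gen_mul_eProd (i : Fin n) (S : Finset (Fin n)) :
    ∃ c : ℝ, gen ε i * eProd ε S = c • eProd ε (symmDiff {i} S) := by
  induction S using Finset.induction_on_min with
  | empty =>
    refine ⟨1, ?_⟩
    rw [eProd_empty, mul_one, ← Finset.bot_eq_empty, symmDiff_bot, one_smul]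
    simp [eProd]
  | insert a s has ih =>
    have has' : a ∉ s := fun ha => (has a ha).false
    rcases lt_trichotomy i a with hia | rfl | hai
    · refine ⟨1, ?_⟩
      have hi : ∀ x ∈ insert a s, i < x := by
        simp only [Finset.mem_insert, forall_eq_or_imp]
        exact ⟨hia, fun x hx => hia.trans (has x hx)⟩
      have hS : symmDiff {i} (insert a s) = insert i (insert a s) := by
        ext; simp only [Finset.mem_symmDiff, Finset.mem_insert, Finset.mem_singleton]
        grind
      rw [one_smul, hS, eProd_insert_of_lt ε hi]
    · refine ⟨ε i, ?_⟩
      have hS : symmDiff {i} (insert i s) = s := by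
        ext; simp only [Finset.mem_symmDiff, Finset.mem_insert, Finset.mem_singleton]
        grind
      rw [hS, eProd_insert_of_lt ε has, ← mul_assoc, gen_mul_self, Algebra.smul_def]
    · obtain ⟨c, hc⟩ := ih
      refine ⟨-c, ?_⟩
      have ha : ∀ x ∈ symmDiff {i} s, a < x := by
        intro x hx
        rw [Finset.mem_symmDiff, Finset.mem_singleton] at hx
        rcases hx with ⟨rfl, -⟩ | ⟨hx, -⟩
        exacts [hai, has x hx]
      have hS : symmDiff {i} (insert a s) = insert a (symmDiff {i} s) := by
        ext; simp only [Finset.mem_symmDiff, Finset.mem_insert, Finset.mem_singleton]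
        grind
      rw [hS, eProd_insert_of_lt ε has, eProd_insert_of_lt ε ha,
        gen_mul_gen_mul_of_ne ε hai.ne', hc, mul_smul_comm, neg_smul]

theorem exists_list_prod_mul_eProd {l : List (Fin n)} (hl : l.Nodup) (J : Finset (Fin n)) :
    ∃ c : ℝ, (l.map (gen ε)).prod * eProd ε J = c • eProd ε (symmDiff l.toFinset J) := by
  induction l with
  | nil => exact ⟨1, by simp [← Finset.bot_eq_empty]⟩
  | cons i t ih =>
    rw [List.nodup_cons] at hl
    obtain ⟨c, hc⟩ := ih hl.2
    obtain ⟨d, hd⟩ := exists_gen_mul_eProd ε i (symmDiff t.toFinset J)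
    refine ⟨c * d, ?_⟩
    have hS : symmDiff (i :: t).toFinset J = symmDiff {i} (symmDiff t.toFinset J) := by
      ext
      simp only [Finset.mem_symmDiff, List.toFinset_cons, Finset.mem_insert,
        Finset.mem_singleton, List.mem_toFinset]
      grind
    rw [List.map_cons, List.prod_cons, mul_assoc, hc, mul_smul_comm, hd, smul_smul, hS]

theorem reverse_prod_mul_prod (l : List (Fin n)) :
    (l.reverse.map (gen ε)).prod * (l.map (gen ε)).prod = algebraMap ℝ _ (l.map ε).prod := by
  induction l with
  | nil => simp
  | cons i t ih =>
    simp only [List.reverse_cons, List.map_append, List.prod_append, List.map_cons, List.map_nil,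
      List.prod_cons, List.prod_nil, mul_one]
    rw [mul_assoc, ← mul_assoc (gen ε i), gen_mul_self, Algebra.commutes, ← mul_assoc, ih,
      ← map_mul, mul_comm (ε i)]

end Generators

section AntiInvolution

variable {n : ℕ} {ε : Fin n → ℝ} (G : CliffordAlgebra (Qe ε) →ₗ[ℝ] CliffordAlgebra (Qe ε))

theorem map_gen (hGι : ∀ v : Fin n → ℝ, G (ι (Qe ε) v) = ι (Qe ε) (fun i => ε i * v i))
    (i : Fin n) : G (gen ε i) = ε i • gen ε i := by
  have : (fun j => ε j * (Pi.single i 1 : Fin n → ℝ) j) = ε i • Pi.single i 1 := by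
    ext j
    by_cases h : j = i <;> simp [h]
  rw [gen, hGι, this, map_smul]

theorem map_list_prod_gen (hG1 : G 1 = 1) (hGm : ∀ a b, G (a * b) = G b * G a)
    (hGι : ∀ v : Fin n → ℝ, G (ι (Qe ε) v) = ι (Qe ε) (fun i => ε i * v i)) (l : List (Fin n)) :
    G (l.map (gen ε)).prod = (l.map ε).prod • (l.reverse.map (gen ε)).prod := by
  induction l with
  | nil => simpa using hG1
  | cons i t ih =>
    rw [List.map_cons, List.prod_cons, hGm, ih, map_gen G hGι, List.reverse_cons, List.map_append,
      List.prod_append, List.map_singleton, List.prod_singleton, smul_mul_smul_comm, List.map_cons,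
      List.prod_cons, mul_comm (ε i)]

theorem map_eProd_mul_eProd_self (hG1 : G 1 = 1) (hGm : ∀ a b, G (a * b) = G b * G a)
    (hGι : ∀ v : Fin n → ℝ, G (ι (Qe ε) v) = ι (Qe ε) (fun i => ε i * v i))
    (hε : ∀ i, ε i * ε i = 1) (K : Finset (Fin n)) :
    G (eProd ε K) * eProd ε K = 1 := by
  rw [eProd, map_list_prod_gen G hG1 hGm hGι, smul_mul_assoc, reverse_prod_mul_prod,
    Algebra.smul_def, ← map_mul, ← List.prod_map_mul]
  simp [hε]

theorem exists_map_eProd_mul_eProd (hG1 : G 1 = 1) (hGm : ∀ a b, G (a * b) = G b * G a)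
    (hGι : ∀ v : Fin n → ℝ, G (ι (Qe ε) v) = ι (Qe ε) (fun i => ε i * v i))
    (K J : Finset (Fin n)) :
    ∃ c : ℝ, G (eProd ε K) * eProd ε J = c • eProd ε (symmDiff K J) := by
  set l := K.sort (· ≤ ·)
  obtain ⟨c, hc⟩ := exists_list_prod_mul_eProd ε (List.nodup_reverse.2 (K.sort_nodup (· ≤ ·))) J
  refine ⟨(l.map ε).prod * c, ?_⟩
  rw [show eProd ε K = (l.map (gen ε)).prod from rfl, map_list_prod_gen G hG1 hGm hGι,
    smul_mul_assoc, hc, smul_smul, List.toFinset_reverse, Finset.sort_toFinset]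

end AntiInvolution

section Pairing

variable {R A ι : Type*} [CommRing R] [Ring A] [Algebra R A] [DecidableEq ι]
  (b : Module.Basis ι R A) (G : A →ₗ[R] A) (τ : A →ₗ[R] R)

theorem Module.Basis.repr_apply_eq_pairing
    (hτ : ∀ i j, τ (G (b i) * b j) = if i = j then 1 else 0) (x : A) (j : ι) :
    b.repr x j = τ (G (b j) * x) := by
  have : b.coord j = τ ∘ₗ LinearMap.mulLeft R (G (b j)) :=
    b.ext fun k => by simp [hτ, Finsupp.single_apply, eq_comm]
  exact LinearMap.congr_fun this x

theorem Module.Basis.pairing_comm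
    (hτ : ∀ i j, τ (G (b i) * b j) = if i = j then 1 else 0) (x : A) (j : ι) :
    τ (G x * b j) = τ (G (b j) * x) := by
  have : τ ∘ₗ LinearMap.mulRight R (b j) ∘ₗ G = τ ∘ₗ LinearMap.mulLeft R (G (b j)) :=
    b.ext fun k => by simp [hτ, eq_comm]
  exact LinearMap.congr_fun this x

theorem Module.Basis.transpose_toMatrix_mulLeft [Fintype ι]
    (hG : ∀ x y, G (x * y) = G y * G x)
    (hτ : ∀ i j, τ (G (b i) * b j) = if i = j then 1 else 0) (u : A) :
    Matrix.transpose (LinearMap.toMatrix b b (LinearMap.mulLeft R u)) =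
      LinearMap.toMatrix b b (LinearMap.mulLeft R (G u)) := by
  ext i j
  rw [Matrix.transpose_apply, LinearMap.toMatrix_apply, LinearMap.toMatrix_apply,
    LinearMap.mulLeft_apply, LinearMap.mulLeft_apply, b.repr_apply_eq_pairing G τ hτ,
    b.repr_apply_eq_pairing G τ hτ, ← mul_assoc (G (b i)), ← hG, b.pairing_comm G τ hτ]

end Pairing

/-- relative to the basis of Grassmann monomials, the matrix of
`L_{Tp_ε(u)}` is the transpose of the matrix of `L_u`. -/
theorem stmt12 {n : ℕ} (ε : Fin n → ℝ) (hε : ∀ i, ε i = 1 ∨ ε i = -1)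
    -- the basis of Grassmann monomials `e_I`
    (bB : Module.Basis (Finset (Fin n)) ℝ (CliffordAlgebra (Qe ε)))
    (hbB : ∀ I, bB I = eProd ε I)
    -- `Tp_ε`: the anti-involution determined by `Tp_ε(eᵢ) = εᵢeᵢ`
    (G : CliffordAlgebra (Qe ε) →ₗ[ℝ] CliffordAlgebra (Qe ε))
    (hG1 : G 1 = 1) (hGm : ∀ a b, G (a * b) = G b * G a)
    (hGι : ∀ v : Fin n → ℝ, G (ι (Qe ε) v) = ι (Qe ε) (fun i => ε i * v i)) :
    ∀ u : CliffordAlgebra (Qe ε),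
      Matrix.transpose (LinearMap.toMatrix bB bB (LinearMap.mulLeft ℝ u))
        = LinearMap.toMatrix bB bB (LinearMap.mulLeft ℝ (G u)) := by
  have hε' : ∀ i, ε i * ε i = 1 := fun i => by rcases hε i with h | h <;> norm_num [h]
  have hcoord : ∀ S, bB.coord ∅ (eProd ε S) = if S = ∅ then 1 else 0 := fun S => by
    rw [← hbB, Module.Basis.coord_apply, Module.Basis.repr_self, Finsupp.single_apply]
  refine bB.transpose_toMatrix_mulLeft G (bB.coord ∅) hGm fun K J => ?_
  rw [hbB, hbB]
  obtain rfl | hKJ := eq_or_ne K J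
  · rw [map_eProd_mul_eProd_self G hG1 hGm hGι hε', ← eProd_empty ε, hcoord, if_pos rfl,
      if_pos rfl]
  · obtain ⟨c, hc⟩ := exists_map_eProd_mul_eProd G hG1 hGm hGι K J
    rw [hc, map_smul, hcoord, if_neg hKJ,
      if_neg fun h : symmDiff K J = ∅ => hKJ (symmDiff_eq_bot.1 h), smul_zero]
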